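/- Let K(κ) = ∫₀^{π/2} (1 − κ² sin²θ)^{−1/2} dθ. Then the function κ ↦ K(κ)² (1 + κ²) is strictly increasing on (0,1). -/

import Mathlib

open Real Set

/-!
Both factors are increasing in `κ ≥ 0`: the integrand `(1 - κ² sin² θ)^{-1/2}` is pointwise
monotone in `κ²`, so `K` is monotone, and `K ≥ π/2 > 0`; the factor `1 + κ²` is strictly
increasing, so the product is strictly increasing.
-/

noncomputable def ellipticK (κ : ℝ) : ℝ :=
  ∫ θ in (0 : ℝ)..(π / 2), (√(1 - κ ^ 2 * sin θ ^ 2))⁻¹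

lemma one_sub_sq_mul_sin_sq_pos {κ : ℝ} (hκ : κ ^ 2 < 1) (θ : ℝ) :
    0 < 1 - κ ^ 2 * sin θ ^ 2 := by
  nlinarith [sin_sq_le_one θ, sq_nonneg κ, sq_nonneg (sin θ)]

lemma intervalIntegrable_ellipticK_integrand {κ : ℝ} (hκ : κ ^ 2 < 1) (a b : ℝ) :
    IntervalIntegrable (fun θ => (√(1 - κ ^ 2 * sin θ ^ 2))⁻¹) MeasureTheory.volume a b := by
  refine Continuous.intervalIntegrable ?_ a b
  refine Continuous.inv₀ (by fun_prop) fun θ => ?_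
  exact (sqrt_pos.2 (one_sub_sq_mul_sin_sq_pos hκ θ)).ne'

lemma pi_div_two_le_ellipticK {κ : ℝ} (hκ : κ ^ 2 < 1) : π / 2 ≤ ellipticK κ := by
  have hint : (∫ _ in (0 : ℝ)..(π / 2), (1 : ℝ)) = π / 2 := by simp
  rw [← hint, ellipticK]
  refine intervalIntegral.integral_mono_on (by positivity) intervalIntegrable_const
    (intervalIntegrable_ellipticK_integrand hκ _ _) fun θ _ => ?_
  have hpos := one_sub_sq_mul_sin_sq_pos hκ θ
  have hle : 1 - κ ^ 2 * sin θ ^ 2 ≤ 1 := by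
    nlinarith [sq_nonneg κ, sq_nonneg (sin θ)]
  rw [le_inv_comm₀ one_pos (sqrt_pos.2 hpos), inv_one]
  exact sqrt_le_one.2 hle

lemma ellipticK_pos {κ : ℝ} (hκ : κ ^ 2 < 1) : 0 < ellipticK κ :=
  (by positivity : (0 : ℝ) < π / 2).trans_le (pi_div_two_le_ellipticK hκ)

lemma ellipticK_le_ellipticK {a b : ℝ} (hab : a ^ 2 ≤ b ^ 2) (hb : b ^ 2 < 1) :
    ellipticK a ≤ ellipticK b := by
  refine intervalIntegral.integral_mono_on (by positivity)
    (intervalIntegrable_ellipticK_integrand (hab.trans_lt hb) _ _)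
    (intervalIntegrable_ellipticK_integrand hb _ _) fun θ _ => ?_
  refine inv_anti₀ (sqrt_pos.2 (one_sub_sq_mul_sin_sq_pos hb θ)) (sqrt_le_sqrt ?_)
  nlinarith [sq_nonneg (sin θ)]

lemma strictMonoOn_ellipticK_sq_mul_one_add_sq :
    StrictMonoOn (fun κ => ellipticK κ ^ 2 * (1 + κ ^ 2)) (Ico 0 1) := by
  intro a ⟨ha0, _⟩ b ⟨hb0, hb1⟩ hab
  have hab2 : a ^ 2 < b ^ 2 := pow_lt_pow_left₀ hab ha0 two_ne_zero
  have hb2 : b ^ 2 < 1 := by nlinarith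
  have hKa := ellipticK_pos (hab2.trans hb2)
  calc ellipticK a ^ 2 * (1 + a ^ 2) < ellipticK a ^ 2 * (1 + b ^ 2) := by gcongr
    _ ≤ ellipticK b ^ 2 * (1 + b ^ 2) := by
        gcongr
        exact ellipticK_le_ellipticK hab2.le hb2

/-- With `K` the complete elliptic integral of the first kind, the function
`κ ↦ K(κ)² (1 + κ²)` is strictly increasing on `(0,1)`. -/
theorem stmt_17
    (K : ℝ → ℝ)
    (hK : K = fun κ : ℝ => ∫ θ in (0 : ℝ)..(Real.pi / 2),
      (Real.sqrt (1 - κ ^ 2 * Real.sin θ ^ 2))⁻¹) :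
    StrictMonoOn (fun κ : ℝ => K κ ^ 2 * (1 + κ ^ 2)) (Set.Ioo (0 : ℝ) 1) := by
  obtain rfl : K = ellipticK := hK
  exact strictMonoOn_ellipticK_sq_mul_one_add_sq.mono Ioo_subset_Ico_self
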